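/- arXiv:2002.00170 — 2 statements merged into one kernel-verified Lean document; each statement's English description precedes it below -/
import Mathlib

section
/- Let α ≥ −1/2 and let C_α = 2(α+1) if α ≥ 1/2 and C_α = 2(α+1) + 1/16 if −1/2 ≤ α < 1/2. Then for every n ∈ ℕ and every real x ≥ 4n + C_α, |L_n^α(x)| ≤ x^n / n!. -/
/-!
The three-term recurrence
`(n + 2) L_{n+2} = (2n + 3 + α - x) L_{n+1} - (n + 1 + α) L_n`
makes both coefficients on the right of fixed sign once `x ≥ 2n + 3 + α`, so the triangle
inequality bounds `|L_{n+2}|` by the inductive bounds `x ^ k / k!` for `k = n, n + 1`; what is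
left is `(n + 1 + α)(n + 1) ≤ (2n + 3 + α) x`, clear since `x ≥ 2n + 3 + α ≥ n + 1`.
-/

open Real

/-- The generalized Laguerre polynomial of order `α` and degree `n`. -/
noncomputable def laguerreL (α : ℝ) (n : ℕ) (x : ℝ) : ℝ :=
  ∑ k ∈ Finset.range (n + 1), (-1 : ℝ) ^ k *
    (Real.Gamma (n + α + 1) / (Real.Gamma (k + α + 1) * (n - k).factorial * k.factorial)) * x ^ k

open Finset
open scoped Nat

/-- Beyond the degree the coefficient is set to `0` (the truncated `(n - k)!` would not vanish),
so that `L_n^α` can be summed over any longer range. -/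
noncomputable def laguerreCoeff (α : ℝ) (n k : ℕ) : ℝ :=
  if k ≤ n then (-1) ^ k * (Gamma (n + α + 1) / (Gamma (k + α + 1) * (n - k)! * k !)) else 0

variable {α : ℝ}

lemma laguerreCoeff_of_lt {n k : ℕ} (h : n < k) : laguerreCoeff α n k = 0 :=
  if_neg h.not_ge

lemma laguerreCoeff_of_le {n k : ℕ} (h : k ≤ n) :
    laguerreCoeff α n k =
      (-1) ^ k * (Gamma (n + α + 1) / (Gamma (k + α + 1) * (n - k)! * k !)) :=
  if_pos h

lemma laguerreL_eq_sum_range {n N : ℕ} (hN : n < N) (x : ℝ) :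
    laguerreL α n x = ∑ k ∈ range N, laguerreCoeff α n k * x ^ k := by
  rw [laguerreL]
  refine sum_subset_zero_on_sdiff (range_subset_range.2 hN) ?_ ?_
  · intro k hk
    simp only [mem_sdiff, mem_range, not_lt] at hk
    rw [laguerreCoeff_of_lt hk.2, zero_mul]
  · intro k hk
    rw [laguerreCoeff, if_pos (Nat.lt_succ_iff.1 (mem_range.1 hk))]

lemma Gamma_natCast_succ_add (hα : -1 < α) (j : ℕ) :
    Gamma (↑(j + 1) + α + 1) = (j + α + 1) * Gamma (j + α + 1) := by
  rw [Nat.cast_succ, add_right_comm, add_right_comm _ α, ← Gamma_add_one]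
  · ring_nf
  · have := j.cast_nonneg (α := ℝ); linarith

lemma Gamma_natCast_add_ne_zero (hα : -1 < α) (j : ℕ) : Gamma (j + α + 1) ≠ 0 :=
  (Gamma_pos_of_pos (by have := j.cast_nonneg (α := ℝ); linarith)).ne'

lemma laguerreCoeff_zero_recurrence (hα : -1 < α) (n : ℕ) :
    (n + 2) * laguerreCoeff α (n + 2) 0 + (n + 1 + α) * laguerreCoeff α n 0 =
      (2 * n + 3 + α) * laguerreCoeff α (n + 1) 0 := by
  simp only [laguerreCoeff, zero_le, if_true, Nat.sub_zero, pow_zero, Nat.factorial_zero,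
    Nat.cast_one, mul_one, one_mul, Nat.cast_zero, zero_add]
  rw [show n + 2 = n + 1 + 1 from rfl, Gamma_natCast_succ_add hα, Gamma_natCast_succ_add hα,
    Nat.factorial_succ, Nat.factorial_succ]
  have := Gamma_natCast_add_ne_zero hα 0
  have := Gamma_natCast_add_ne_zero hα n
  have := n.cast_nonneg (α := ℝ)
  simp only [Nat.cast_zero, zero_add] at *
  push_cast
  field_simp
  ring

lemma laguerreCoeff_succ_recurrence (hα : -1 < α) (n k : ℕ) :
    (n + 2) * laguerreCoeff α (n + 2) (k + 1) + laguerreCoeff α (n + 1) k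
      + (n + 1 + α) * laguerreCoeff α n (k + 1) =
      (2 * n + 3 + α) * laguerreCoeff α (n + 1) (k + 1) := by
  have hk := k.cast_nonneg (α := ℝ)
  have hk₁ : (k : ℝ) + α + 1 ≠ 0 := by linarith
  have hΓ := Gamma_natCast_add_ne_zero hα k
  rcases lt_trichotomy k n with hkn | rfl | hnk
  · obtain ⟨m, rfl⟩ : ∃ m, n = k + m + 1 := ⟨n - k - 1, by omega⟩
    simp (disch := omega) only [laguerreCoeff_of_le]
    rw [show k + m + 1 + 2 - (k + 1) = m + 1 + 1 by omega,
      show k + m + 1 + 1 - k = m + 1 + 1 by omega, show k + m + 1 - (k + 1) = m by omega,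
      show k + m + 1 + 1 - (k + 1) = m + 1 by omega,
      show k + m + 1 + 2 = k + m + 1 + 1 + 1 from rfl, Gamma_natCast_succ_add hα,
      Gamma_natCast_succ_add hα (k + m + 1), Gamma_natCast_succ_add hα k]
    simp only [Nat.factorial_succ]
    have := m.cast_nonneg (α := ℝ)
    push_cast
    field_simp
    ring
  · rw [laguerreCoeff_of_lt (Nat.lt_succ_self k)]
    simp (disch := omega) only [laguerreCoeff_of_le]
    rw [show k + 2 - (k + 1) = 1 by omega, show k + 1 - k = 1 by omega, Nat.sub_self,
      show k + 2 = k + 1 + 1 from rfl, Gamma_natCast_succ_add hα, Gamma_natCast_succ_add hα k]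
    simp only [Nat.factorial_succ]
    push_cast
    field_simp
    ring
  · rw [laguerreCoeff_of_lt (by omega : n < k + 1), laguerreCoeff_of_lt (by omega : n + 1 < k + 1)]
    obtain rfl | hnk : k = n + 1 ∨ n + 1 < k := by omega
    · simp (disch := omega) only [laguerreCoeff_of_le]
      rw [Nat.sub_self, Nat.sub_self, show n + 2 = n + 1 + 1 from rfl, Gamma_natCast_succ_add hα]
      simp only [Nat.factorial_succ]
      push_cast at hk₁ hΓ ⊢
      field_simp
      ring
    · rw [laguerreCoeff_of_lt (by omega : n + 2 < k + 1),
        laguerreCoeff_of_lt (by omega : n + 1 < k)]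
      ring

lemma laguerreL_eq_coeff_zero_add_sum {n N : ℕ} (hN : n < N + 1) (x : ℝ) :
    laguerreL α n x =
      laguerreCoeff α n 0 + ∑ k ∈ range N, laguerreCoeff α n (k + 1) * x ^ (k + 1) := by
  rw [laguerreL_eq_sum_range hN, sum_range_succ', pow_zero, mul_one, add_comm]

theorem laguerreL_recurrence (hα : -1 < α) (n : ℕ) (x : ℝ) :
    (n + 2) * laguerreL α (n + 2) x =
      (2 * n + 3 + α - x) * laguerreL α (n + 1) x - (n + 1 + α) * laguerreL α n x := by
  have hcoeff : ∑ k ∈ range (n + 2), ((n + 2) * laguerreCoeff α (n + 2) (k + 1)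
      + laguerreCoeff α (n + 1) k + (n + 1 + α) * laguerreCoeff α n (k + 1)) * x ^ (k + 1) =
      ∑ k ∈ range (n + 2), (2 * n + 3 + α) * laguerreCoeff α (n + 1) (k + 1) * x ^ (k + 1) :=
    sum_congr rfl fun k _ ↦ by rw [laguerreCoeff_succ_recurrence hα]
  simp only [add_mul, sum_add_distrib, mul_assoc, ← mul_sum] at hcoeff
  have hx : x * laguerreL α (n + 1) x =
      ∑ k ∈ range (n + 2), laguerreCoeff α (n + 1) k * x ^ (k + 1) := by
    simp only [laguerreL_eq_sum_range (by omega : n + 1 < n + 2), mul_sum, pow_succ]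
    exact sum_congr rfl fun k _ ↦ by ring
  have e₂ := laguerreL_eq_coeff_zero_add_sum (α := α) (by omega : n + 2 < n + 2 + 1) x
  have e₁ := laguerreL_eq_coeff_zero_add_sum (α := α) (by omega : n + 1 < n + 2 + 1) x
  have e₀ := laguerreL_eq_coeff_zero_add_sum (α := α) (by omega : n < n + 2 + 1) x
  rw [e₁] at hx
  rw [e₂, e₁, e₀]
  linear_combination hcoeff + hx + laguerreCoeff_zero_recurrence hα n

lemma laguerreL_zero (hα : -1 < α) (x : ℝ) : laguerreL α 0 x = 1 := by
  have hΓ := Gamma_natCast_add_ne_zero hα 0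
  simp_all [laguerreL]

lemma laguerreL_one (hα : -1 < α) (x : ℝ) : laguerreL α 1 x = α + 1 - x := by
  have hΓ := Gamma_natCast_add_ne_zero hα 0
  have hΓ₁ := Gamma_natCast_succ_add hα 0
  have hα₁ : α + 1 ≠ 0 := by linarith
  simp only [zero_add, Nat.cast_zero, Nat.cast_one] at hΓ hΓ₁
  simp [laguerreL, sum_range_succ, hΓ₁]
  field_simp
  ring

lemma abs_le_pow_div_factorial_of_recurrence {n : ℕ} {x a b c : ℝ} (hα : -1 < α)
    (hx : 2 * n + 3 + α ≤ x) (hrec : (n + 2) * c = (2 * n + 3 + α - x) * b - (n + 1 + α) * a)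
    (ha : |a| ≤ x ^ n / n !) (hb : |b| ≤ x ^ (n + 1) / (n + 1)!) :
    |c| ≤ x ^ (n + 2) / (n + 2)! := by
  have hn := n.cast_nonneg (α := ℝ)
  have hx₀ : 0 ≤ x := by linarith
  set F := x ^ n / (n + 1)! with hF
  have hF₀ : 0 ≤ F := by positivity
  have hFa : x ^ n / n ! = (n + 1) * F := by
    rw [hF, Nat.factorial_succ]; push_cast; field_simp
  have hFb : x ^ (n + 1) / (n + 1)! = x * F := by rw [hF, pow_succ]; ring
  have hFc : x ^ (n + 2) / (n + 2)! = x ^ 2 * F / (n + 2) := by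
    rw [hF, Nat.factorial_succ (n + 1)]; push_cast; field_simp; ring
  have key : (n + 1 + α) * (n + 1) ≤ (2 * n + 3 + α) * x := by nlinarith
  have hbound : (n + 2) * |c| ≤ x ^ 2 * F := by
    rw [← abs_of_pos (by positivity : (0 : ℝ) < n + 2), ← abs_mul, hrec]
    calc |(2 * n + 3 + α - x) * b - (n + 1 + α) * a|
        ≤ (x - (2 * n + 3 + α)) * |b| + (n + 1 + α) * |a| := by
          refine (abs_sub _ _).trans_eq ?_
          rw [abs_mul, abs_mul, abs_sub_comm, abs_of_nonneg (by linarith),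
            abs_of_nonneg (by linarith : 0 ≤ (n : ℝ) + 1 + α)]
      _ ≤ (x - (2 * n + 3 + α)) * (x * F) + (n + 1 + α) * ((n + 1) * F) := by
          rw [← hFa, ← hFb]; gcongr; linarith
      _ ≤ x ^ 2 * F := by nlinarith
  rw [hFc, le_div_iff₀ (by positivity)]
  linarith

theorem abs_laguerreL_le (hα : -1 < α) :
    ∀ (n : ℕ) {x : ℝ}, 2 * n - 1 + α ≤ x → |laguerreL α n x| ≤ x ^ n / n !
  | 0, x, _ => by simp [laguerreL_zero hα]
  | 1, x, hx => by
    rw [laguerreL_one hα, abs_sub_comm, abs_of_nonneg (by push_cast at hx; linarith)]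
    simp only [pow_one, Nat.factorial_one, Nat.cast_one, div_one]
    linarith
  | n + 2, x, hx => by
    push_cast at hx
    exact abs_le_pow_div_factorial_of_recurrence hα (by linarith) (laguerreL_recurrence hα n x)
      (abs_laguerreL_le hα n (by linarith)) (abs_laguerreL_le hα (n + 1) (by push_cast; linarith))

theorem stmt4 (α : ℝ) (hα : -1/2 ≤ α) (Cα : ℝ)
    (hC : Cα = if (1/2 : ℝ) ≤ α then 2 * (α + 1) else 2 * (α + 1) + 1/16) :
    ∀ (n : ℕ) (x : ℝ), 4 * n + Cα ≤ x → |laguerreL α n x| ≤ x ^ n / n.factorial := by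
  have hCα : 2 * (α + 1) ≤ Cα := by rw [hC]; split_ifs <;> linarith
  intro n x hx
  exact abs_laguerreL_le (by linarith) n (by linarith [n.cast_nonneg (α := ℝ)])
end

section
/- Let β > 1 and let a > √(β − 1). Then ∫_a^∞ t^β e^{−t²} dt ≤ a^{β−1} e^{−a²}. -/
/-! With `F t = t ^ (β - 1) * exp (-t ^ 2)` one has
`-F' t = (2 * t ^ β - (β - 1) * t ^ (β - 2)) * exp (-t ^ 2)`, and for `t > a` the hypothesis gives
`β - 1 < t ^ 2`, so `-F' t ≥ t ^ β * exp (-t ^ 2)`. Integrating over `(a, ∞)` and using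
`F t → 0` bounds the integral by `F a`. -/

open Real MeasureTheory Set Filter Topology

lemma hasDerivAt_rpow_mul_exp_neg_sq (s : ℝ) {x : ℝ} (hx : 0 < x) :
    HasDerivAt (fun t => t ^ s * exp (-t ^ 2))
      ((s * x ^ (s - 1) - 2 * x ^ (s + 1)) * exp (-x ^ 2)) x := by
  have hpow : HasDerivAt (fun t => t ^ s) (s * x ^ (s - 1)) x :=
    hasDerivAt_rpow_const (Or.inl hx.ne')
  have hexp : HasDerivAt (fun t => exp (-t ^ 2)) (exp (-x ^ 2) * -(2 * x)) x := by
    simpa using ((hasDerivAt_pow 2 x).neg).exp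
  refine (hpow.mul hexp).congr_deriv ?_
  rw [rpow_add hx, rpow_one]
  ring

lemma tendsto_rpow_mul_exp_neg_sq_atTop (s : ℝ) :
    Tendsto (fun t => t ^ s * exp (-t ^ 2)) atTop (𝓝 0) := by
  simpa using (rpow_mul_exp_neg_mul_sq_isLittleO_exp_neg one_pos s).tendsto_zero_of_tendsto
    (tendsto_exp_atBot.comp (tendsto_id.const_mul_atTop_of_neg (by norm_num)))

lemma integrableOn_Ioi_rpow_mul_exp_neg_sq (s : ℝ) {a : ℝ} (ha : 0 < a) :
    IntegrableOn (fun t => t ^ s * exp (-t ^ 2)) (Ioi a) := by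
  refine integrable_of_isBigO_exp_neg one_half_pos ?_ ?_
  · refine ContinuousOn.mul (fun t ht => ?_) (by fun_prop)
    exact (continuousAt_rpow_const t s (Or.inl (ha.trans_le ht).ne')).continuousWithinAt
  · simpa using (rpow_mul_exp_neg_mul_sq_isLittleO_exp_neg one_pos s).isBigO

lemma integrableOn_Ioi_sub_rpow_mul_exp_neg_sq (s : ℝ) {a : ℝ} (ha : 0 < a) :
    IntegrableOn (fun t => (2 * t ^ (s + 1) - s * t ^ (s - 1)) * exp (-t ^ 2)) (Ioi a) := by
  simp only [sub_mul, mul_assoc]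
  exact ((integrableOn_Ioi_rpow_mul_exp_neg_sq (s + 1) ha).const_mul 2).sub
    ((integrableOn_Ioi_rpow_mul_exp_neg_sq (s - 1) ha).const_mul s)

lemma integral_Ioi_neg_deriv_rpow_mul_exp_neg_sq (s : ℝ) {a : ℝ} (ha : 0 < a) :
    ∫ t in Ioi a, (2 * t ^ (s + 1) - s * t ^ (s - 1)) * exp (-t ^ 2) = a ^ s * exp (-a ^ 2) := by
  have hderiv (x : ℝ) (hx : x ∈ Ici a) : HasDerivAt (fun t => -(t ^ s * exp (-t ^ 2)))
      ((2 * x ^ (s + 1) - s * x ^ (s - 1)) * exp (-x ^ 2)) x := by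
    refine (hasDerivAt_rpow_mul_exp_neg_sq s (ha.trans_le hx)).neg.congr_deriv ?_
    ring
  rw [integral_Ioi_of_hasDerivAt_of_tendsto' hderiv
    (integrableOn_Ioi_sub_rpow_mul_exp_neg_sq s ha)
    (by simpa using (tendsto_rpow_mul_exp_neg_sq_atTop s).neg)]
  ring

lemma rpow_le_two_mul_rpow_sub {β t : ℝ} (ht : 0 < t) (hβt : β - 1 ≤ t ^ 2) :
    t ^ β ≤ 2 * t ^ β - (β - 1) * t ^ (β - 2) := by
  have hsplit : t ^ β = t ^ 2 * t ^ (β - 2) := by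
    rw [← rpow_natCast, ← rpow_add ht]
    norm_num
  have : (β - 1) * t ^ (β - 2) ≤ t ^ β :=
    hsplit ▸ mul_le_mul_of_nonneg_right hβt (rpow_nonneg ht.le _)
  linarith

theorem stmt6_general (β a : ℝ) (ha : Real.sqrt (β - 1) < a) :
    ∫ t in Set.Ioi a, t ^ β * Real.exp (-t ^ 2) ≤ a ^ (β - 1) * Real.exp (-a ^ 2) := by
  have ha0 : 0 < a := (sqrt_nonneg _).trans_lt ha
  have hexact := integral_Ioi_neg_deriv_rpow_mul_exp_neg_sq (β - 1) ha0
  have hint := integrableOn_Ioi_sub_rpow_mul_exp_neg_sq (β - 1) ha0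
  rw [sub_add_cancel, sub_sub, one_add_one_eq_two] at hexact hint
  rw [← hexact]
  refine setIntegral_mono_on (integrableOn_Ioi_rpow_mul_exp_neg_sq β ha0) hint measurableSet_Ioi
    fun t ht => mul_le_mul_of_nonneg_right
      (rpow_le_two_mul_rpow_sub (ha0.trans ht) (lt_sq_of_sqrt_lt (ha.trans ht)).le) (exp_pos _).le

theorem stmt6 (β a : ℝ) (hβ : 1 < β) (ha : Real.sqrt (β - 1) < a) :
    ∫ t in Set.Ioi a, t ^ β * Real.exp (-t ^ 2) ≤ a ^ (β - 1) * Real.exp (-a ^ 2) :=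
  stmt6_general β a ha
end
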